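/- Let G be an edge-colored complete 3-uniform hypergraph K_n^{(3)} that is rainbow 𝒯-free. Then G contains no rainbow copy of the loose cycle C_3^{(3)}, no rainbow copy of the loose star S_3^{(3)}, and no rainbow copy of 𝕊_3^{(3)}. -/
import Mathlib
set_option maxHeartbeats 2000000


/-- There is a rainbow tight path `𝒯` (edges `v₁v₂v₃, v₂v₃v₄, v₃v₄v₅`). -/
def HasRainbowTight {n : ℕ} (c : Finset (Fin n) → ℕ) : Prop :=
  ∃ v : Fin 5 → Fin n, Function.Injective v ∧
    c {v 0, v 1, v 2} ≠ c {v 1, v 2, v 3} ∧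
    c {v 0, v 1, v 2} ≠ c {v 2, v 3, v 4} ∧
    c {v 1, v 2, v 3} ≠ c {v 2, v 3, v 4}

/-- There is a rainbow loose cycle `C₃^{(3)}` (edges `v₁v₂v₃, v₃v₄v₅, v₅v₆v₁`). -/
def HasRainbowLooseCycle {n : ℕ} (c : Finset (Fin n) → ℕ) : Prop :=
  ∃ v : Fin 6 → Fin n, Function.Injective v ∧
    c {v 0, v 1, v 2} ≠ c {v 2, v 3, v 4} ∧
    c {v 0, v 1, v 2} ≠ c {v 4, v 5, v 0} ∧
    c {v 2, v 3, v 4} ≠ c {v 4, v 5, v 0}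

/-- There is a rainbow loose star `S₃^{(3)}` (edges `v₀v₁v₂, v₀v₃v₄, v₀v₅v₆`). -/
def HasRainbowLooseStar {n : ℕ} (c : Finset (Fin n) → ℕ) : Prop :=
  ∃ v : Fin 7 → Fin n, Function.Injective v ∧
    c {v 0, v 1, v 2} ≠ c {v 0, v 3, v 4} ∧
    c {v 0, v 1, v 2} ≠ c {v 0, v 5, v 6} ∧
    c {v 0, v 3, v 4} ≠ c {v 0, v 5, v 6}

/-- There is a rainbow `𝕊₃^{(3)}` (edges `uvv₁, uvv₂, uvv₃`). -/
def HasRainbowTightStar {n : ℕ} (c : Finset (Fin n) → ℕ) : Prop :=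
  ∃ v : Fin 5 → Fin n, Function.Injective v ∧
    c {v 0, v 1, v 2} ≠ c {v 0, v 1, v 3} ∧
    c {v 0, v 1, v 2} ≠ c {v 0, v 1, v 4} ∧
    c {v 0, v 1, v 3} ≠ c {v 0, v 1, v 4}

/-- Color of an (unordered) triple. -/
def T {n : ℕ} (c : Finset (Fin n) → ℕ) (a b d : Fin n) : ℕ := c {a, b, d}


lemma T213 {n : ℕ} (c : Finset (Fin n) → ℕ) (a b d : Fin n) : T c a b d = T c b a d := by
  unfold T; congr 1; ext w; simp; tauto

lemma T132 {n : ℕ} (c : Finset (Fin n) → ℕ) (a b d : Fin n) : T c a b d = T c a d b := by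
  unfold T; congr 1; ext w; simp; tauto

lemma T231 {n : ℕ} (c : Finset (Fin n) → ℕ) (a b d : Fin n) : T c a b d = T c b d a :=
  (T213 c a b d).trans (T132 c b a d)

lemma T312 {n : ℕ} (c : Finset (Fin n) → ℕ) (a b d : Fin n) : T c a b d = T c d a b :=
  (T132 c a b d).trans (T213 c a d b)

lemma T321 {n : ℕ} (c : Finset (Fin n) → ℕ) (a b d : Fin n) : T c a b d = T c d b a :=
  (T231 c a b d).trans (T213 c b d a)


/-- Path lemma: in a rainbow-𝒯-free coloring, any tight path on 5 distinct
vertices has two edges of the same color. -/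
lemma tpath {n : ℕ} (c : Finset (Fin n) → ℕ) (hfree : ¬ HasRainbowTight c)
    (a b d e f : Fin n) (h1 : a ≠ b) (h2 : a ≠ d) (h3 : a ≠ e) (h4 : a ≠ f)
    (h5 : b ≠ d) (h6 : b ≠ e) (h7 : b ≠ f) (h8 : d ≠ e) (h9 : d ≠ f) (h10 : e ≠ f) :
    T c a b d = T c b d e ∨ T c a b d = T c d e f ∨ T c b d e = T c d e f := by
  by_contra h
  push_neg at h
  exact hfree ⟨![a, b, d, e, f], by
    intro i j hij
    fin_cases i <;> fin_cases j <;> simp_all, h.1, h.2.1, h.2.2⟩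

/-- No rainbow `𝕊₃^{(3)}`, in disjunction form. -/
lemma NS {n : ℕ} (c : Finset (Fin n) → ℕ) (hfree : ¬ HasRainbowTight c)
    (u v p q r : Fin n)
    (nuv : u ≠ v) (nup : u ≠ p) (nuq : u ≠ q) (nur : u ≠ r)
    (nvp : v ≠ p) (nvq : v ≠ q) (nvr : v ≠ r)
    (npq : p ≠ q) (npr : p ≠ r) (nqr : q ≠ r) :
    T c u v p = T c u v q ∨ T c u v p = T c u v r ∨ T c u v q = T c u v r := by
  by_contra h
  push_neg at h
  obtain ⟨h12, h13, h23⟩ := h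
  have e_ruv : T c r u v = T c u v r := T231 c r u v
  have e_quv : T c q u v = T c u v q := T231 c q u v
  have e_puv : T c p u v = T c u v p := T231 c p u v
  have e_vqp : T c v q p = T c v p q := T132 c v q p
  have e_vrp : T c v r p = T c v p r := T132 c v r p
  have e_vrq : T c v r q = T c v q r := T132 c v r q
  have e_rpq : T c r p q = T c p q r := T231 c r p q
  have e_pqv : T c p q v = T c v p q := T312 c p q v
  have e_qvu : T c q v u = T c u v q := T321 c q v u
  have e_qrp : T c q r p = T c p q r := T312 c q r p
  have e_rpv : T c r p v = T c v p r := T321 c r p v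
  have e_pvu : T c p v u = T c u v p := T321 c p v u
  have e_qrv : T c q r v = T c v q r := T312 c q r v
  have e_rvu : T c r v u = T c u v r := T321 c r v u
  have P1 := tpath c hfree r u v p q nur.symm nvr.symm npr.symm nqr.symm nuv nup nuq nvp nvq npq
  have P2 := tpath c hfree r u v q p nur.symm nvr.symm nqr.symm npr.symm nuv nuq nup nvq nvp npq.symm
  have hA12 : T c v p q = T c u v r := by
    rcases P1 with h | h | h <;> rcases P2 with g | g | g <;> omega
  clear P1 P2
  have P3 := tpath c hfree q u v p r nuq.symm nvq.symm npq.symm nqr nuv nup nur nvp nvr npr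
  have P4 := tpath c hfree q u v r p nuq.symm nvq.symm nqr npq.symm nuv nur nup nvr nvp npr.symm
  have hA13 : T c v p r = T c u v q := by
    rcases P3 with h | h | h <;> rcases P4 with g | g | g <;> omega
  clear P3 P4
  have P5 := tpath c hfree p u v q r nup.symm nvp.symm npq npr nuv nuq nur nvq nvr nqr
  have P6 := tpath c hfree p u v r q nup.symm nvp.symm npr npq nuv nur nuq nvr nvq nqr.symm
  have hA23 : T c v q r = T c u v p := by
    rcases P5 with h | h | h <;> rcases P6 with g | g | g <;> omega
  clear P5 P6
  have Q1 := tpath c hfree r p q v u npr.symm nqr.symm nvr.symm nur.symm npq nvp.symm nup.symm nvq.symm nuq.symm nuv.symm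
  have Q2 := tpath c hfree q r p v u nqr npq.symm nvq.symm nuq.symm npr.symm nvr.symm nur.symm nvp.symm nup.symm nuv.symm
  have Q3 := tpath c hfree p q r v u npq npr nvp.symm nup.symm nqr nvq.symm nuq.symm nvr.symm nur.symm nuv.symm
  clear hfree nuv nup nuq nur nvp nvq nvr npq npr nqr
  rcases Q1 with h | h | h <;> rcases Q2 with g | g | g <;> rcases Q3 with k | k | k <;> omega

/-- Auxiliary contradiction for the loose star. -/
lemma star_aux {n : ℕ} (c : Finset (Fin n) → ℕ) (hfree : ¬ HasRainbowTight c)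
    (z a b p q x y : Fin n)
    (nza : z ≠ a) (nzb : z ≠ b) (nzp : z ≠ p) (nzq : z ≠ q) (nzx : z ≠ x) (nzy : z ≠ y)
    (nab : a ≠ b) (nap : a ≠ p) (naq : a ≠ q) (nax : a ≠ x) (nay : a ≠ y)
    (nbp : b ≠ p) (nbq : b ≠ q) (nbx : b ≠ x) (nby : b ≠ y)
    (npq : p ≠ q) (npx : p ≠ x) (npy : p ≠ y)
    (nqx : q ≠ x) (nqy : q ≠ y) (nxy : x ≠ y)
    (hbp : T c z b p = T c z p q)
    (hab_pq : T c z a b ≠ T c z p q)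
    (hab_xy : T c z a b ≠ T c z x y)
    (hpq_xy : T c z p q ≠ T c z x y) : False := by
  have e1 : T c a b z = T c z a b := T312 c a b z
  have e2 : T c b z x = T c z b x := T213 c b z x
  have e3 : T c z b a = T c z a b := T132 c z b a
  have e4 : T c q p z = T c z p q := T321 c q p z
  have e5 : T c p z x = T c z p x := T213 c p z x
  have e6 : T c z x b = T c z b x := T132 c z x b
  have e7 : T c z x p = T c z p x := T132 c z x p
  have e8 : T c b a z = T c z a b := T321 c b a z
  have e9 : T c a z p = T c z a p := T213 c a z p
  have e10 : T c a z x = T c z a x := T213 c a z x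
  have e11 : T c b p z = T c z b p := T312 c b p z
  have e13 : T c z x a = T c z a x := T132 c z x a
  have e14 : T c a z q = T c z a q := T213 c a z q
  have e15 : T c z q p = T c z p q := T132 c z q p
  have e16 : T c p q z = T c z p q := T312 c p q z
  have e17 : T c q z x = T c z q x := T213 c q z x
  have e18 : T c z q a = T c z a q := T132 c z q a
  have e19 : T c z x q = T c z q x := T132 c z x q
  have e20 : T c x p z = T c z p x := T321 c x p z
  have e21 : T c p z a = T c z a p := T231 c p z a
  have t1 := tpath c hfree a b z x y nab nza.symm nax nay nzb.symm nbx nby nzx nzy nxy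
  have hfbx1 : T c z b x = T c z a b ∨ T c z b x = T c z x y := by
    rcases t1 with h | h | h <;> omega
  clear t1
  have n1 := NS c hfree z b a p x nzb nza nzp nzx nab.symm nbp nbx nap nax npx
  have hfbx : T c z b x = T c z a b := by
    rcases n1 with h | h | h <;> rcases hfbx1 with g | g <;> omega
  clear n1 hfbx1
  have t2 := tpath c hfree q p z x y npq.symm nzq.symm nqx nqy nzp.symm npx npy nzx nzy nxy
  have hfpx1 : T c z p x = T c z p q ∨ T c z p x = T c z x y := by
    rcases t2 with h | h | h <;> omega
  clear t2
  have n2 := NS c hfree z x y b p nzx nzy nzb nzp nxy nbx.symm npx.symm nby.symm npy.symm nbp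
  have hfpx : T c z p x = T c z x y := by
    rcases n2 with h | h | h <;> rcases hfpx1 with g | g <;> omega
  clear n2 hfpx1
  have t3 := tpath c hfree b a z p q nab.symm nzb.symm nbp nbq nza.symm nap naq nzp nzq npq
  have hfap1 : T c z a p = T c z a b ∨ T c z a p = T c z p q := by
    rcases t3 with h | h | h <;> omega
  clear t3
  have t4 := tpath c hfree b a z x y nab.symm nzb.symm nbx nby nza.symm nax nay nzx nzy nxy
  have hfax1 : T c z a x = T c z a b ∨ T c z a x = T c z x y := by
    rcases t4 with h | h | h <;> omega
  clear t4
  have n3 := NS c hfree z a b p x nza nzb nzp nzx nab nap nax nbp nbx npx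
  have hkey : T c z a p = T c z a b ∨ T c z a x = T c z a b := by
    rcases n3 with h | h | h <;> rcases hfap1 with g | g <;> rcases hfax1 with k | k <;> omega
  clear n3 hfap1 hfax1
  rcases hkey with hfap | hfax
  · have t6 := tpath c hfree b a z q p nab.symm nzb.symm nbq nbp nza.symm naq nap nzq nzp npq.symm
    have hfaq1 : T c z a q = T c z a b ∨ T c z a q = T c z p q := by
      rcases t6 with h | h | h <;> omega
    clear t6
    rcases hfaq1 with hfaq | hfaq
    · have t8 := tpath c hfree p q z x y npq nzp.symm npx npy nzq.symm nqx nqy nzx nzy nxy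
      have hfqx1 : T c z q x = T c z p q ∨ T c z q x = T c z x y := by
        rcases t8 with h | h | h <;> omega
      clear t8
      have n4 := NS c hfree z q p a x nzq nzp nza nzx npq.symm naq.symm nqx nap.symm npx nax
      have hfqx : T c z q x = T c z p q := by
        rcases n4 with h | h | h <;> rcases hfqx1 with g | g <;> omega
      clear n4 hfqx1
      have n5 := NS c hfree z x q b y nzx nzq nzb nzy nqx.symm nbx.symm nxy nbq.symm nqy nby
      rcases n5 with h | h | h <;> omega
    · have t7 := tpath c hfree x p z a q npx.symm nzx.symm nax.symm nqx.symm nzp.symm nap.symm npq nza nzq naq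
      rcases t7 with h | h | h <;> omega
  · have t5 := tpath c hfree b p z x a nbp nzb.symm nbx nab.symm nzp.symm npx nap.symm nzx nza nax.symm
    rcases t5 with h | h | h <;> omega

/-- A rainbow-`𝒯`-free edge-colored `K_n^{(3)}` contains no rainbow `C₃^{(3)}`,
no rainbow `S₃^{(3)}` and no rainbow `𝕊₃^{(3)}`. -/
theorem tight_free_no_rainbow_substructures (n : ℕ) (c : Finset (Fin n) → ℕ)
    (hfree : ¬ HasRainbowTight c) :
    ¬ HasRainbowLooseCycle c ∧ ¬ HasRainbowLooseStar c ∧ ¬ HasRainbowTightStar c := by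
  refine ⟨?_, ?_, ?_⟩
  · -- loose cycle
    rintro ⟨v, hinj, h1, h2, h3⟩
    have h1' : T c (v 0) (v 1) (v 2) ≠ T c (v 2) (v 3) (v 4) := h1
    have h2' : T c (v 0) (v 1) (v 2) ≠ T c (v 4) (v 5) (v 0) := h2
    have h3' : T c (v 2) (v 3) (v 4) ≠ T c (v 4) (v 5) (v 0) := h3
    have n01 : v 0 ≠ v 1 := hinj.ne (by decide)
    have n02 : v 0 ≠ v 2 := hinj.ne (by decide)
    have n03 : v 0 ≠ v 3 := hinj.ne (by decide)
    have n04 : v 0 ≠ v 4 := hinj.ne (by decide)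
    have n05 : v 0 ≠ v 5 := hinj.ne (by decide)
    have n12 : v 1 ≠ v 2 := hinj.ne (by decide)
    have n13 : v 1 ≠ v 3 := hinj.ne (by decide)
    have n14 : v 1 ≠ v 4 := hinj.ne (by decide)
    have n15 : v 1 ≠ v 5 := hinj.ne (by decide)
    have n23 : v 2 ≠ v 3 := hinj.ne (by decide)
    have n24 : v 2 ≠ v 4 := hinj.ne (by decide)
    have n25 : v 2 ≠ v 5 := hinj.ne (by decide)
    have n34 : v 3 ≠ v 4 := hinj.ne (by decide)
    have n35 : v 3 ≠ v 5 := hinj.ne (by decide)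
    have n45 : v 4 ≠ v 5 := hinj.ne (by decide)
    have e1 : T c (v 1) (v 0) (v 2) = T c (v 0) (v 1) (v 2) := T213 c (v 1) (v 0) (v 2)
    have e2 : T c (v 2) (v 4) (v 3) = T c (v 2) (v 3) (v 4) := T132 c (v 2) (v 4) (v 3)
    have e3 : T c (v 1) (v 2) (v 0) = T c (v 0) (v 1) (v 2) := T312 c (v 1) (v 2) (v 0)
    have e4 : T c (v 2) (v 0) (v 4) = T c (v 0) (v 2) (v 4) := T213 c (v 2) (v 0) (v 4)
    have e5 : T c (v 0) (v 4) (v 5) = T c (v 4) (v 5) (v 0) := T231 c (v 0) (v 4) (v 5)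
    have e6 : T c (v 3) (v 2) (v 4) = T c (v 2) (v 3) (v 4) := T213 c (v 3) (v 2) (v 4)
    have e7 : T c (v 2) (v 4) (v 0) = T c (v 0) (v 2) (v 4) := T312 c (v 2) (v 4) (v 0)
    have e8 : T c (v 4) (v 0) (v 5) = T c (v 4) (v 5) (v 0) := T132 c (v 4) (v 0) (v 5)
    have P1 := tpath c hfree (v 1) (v 0) (v 2) (v 4) (v 3) n01.symm n12 n14 n13 n02 n04 n03 n24 n23 n34.symm
    have P2 := tpath c hfree (v 1) (v 2) (v 0) (v 4) (v 5) n12 n01.symm n14 n15 n02.symm n24 n25 n04 n05 n45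
    have P3 := tpath c hfree (v 3) (v 2) (v 4) (v 0) (v 5) n23.symm n34 n03.symm n35 n24 n02.symm n25 n04.symm n45 n05
    clear hfree hinj h1 h2 h3 n01 n02 n03 n04 n05 n12 n13 n14 n15 n23 n24 n25 n34 n35 n45
    rcases P1 with h | h | h <;> rcases P2 with g | g | g <;> rcases P3 with k | k | k <;> omega
  · -- loose star
    rintro ⟨v, hinj, h1, h2, h3⟩
    have h1' : T c (v 0) (v 1) (v 2) ≠ T c (v 0) (v 3) (v 4) := h1
    have h2' : T c (v 0) (v 1) (v 2) ≠ T c (v 0) (v 5) (v 6) := h2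
    have h3' : T c (v 0) (v 3) (v 4) ≠ T c (v 0) (v 5) (v 6) := h3
    have n01 : v 0 ≠ v 1 := hinj.ne (by decide)
    have n02 : v 0 ≠ v 2 := hinj.ne (by decide)
    have n03 : v 0 ≠ v 3 := hinj.ne (by decide)
    have n04 : v 0 ≠ v 4 := hinj.ne (by decide)
    have n05 : v 0 ≠ v 5 := hinj.ne (by decide)
    have n06 : v 0 ≠ v 6 := hinj.ne (by decide)
    have n12 : v 1 ≠ v 2 := hinj.ne (by decide)
    have n13 : v 1 ≠ v 3 := hinj.ne (by decide)
    have n14 : v 1 ≠ v 4 := hinj.ne (by decide)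
    have n15 : v 1 ≠ v 5 := hinj.ne (by decide)
    have n16 : v 1 ≠ v 6 := hinj.ne (by decide)
    have n23 : v 2 ≠ v 3 := hinj.ne (by decide)
    have n24 : v 2 ≠ v 4 := hinj.ne (by decide)
    have n25 : v 2 ≠ v 5 := hinj.ne (by decide)
    have n26 : v 2 ≠ v 6 := hinj.ne (by decide)
    have n34 : v 3 ≠ v 4 := hinj.ne (by decide)
    have n35 : v 3 ≠ v 5 := hinj.ne (by decide)
    have n36 : v 3 ≠ v 6 := hinj.ne (by decide)
    have n45 : v 4 ≠ v 5 := hinj.ne (by decide)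
    have n46 : v 4 ≠ v 6 := hinj.ne (by decide)
    have n56 : v 5 ≠ v 6 := hinj.ne (by decide)
    have p1 : T c (v 1) (v 2) (v 0) = T c (v 0) (v 1) (v 2) := T312 c (v 1) (v 2) (v 0)
    have p2 : T c (v 2) (v 0) (v 3) = T c (v 0) (v 2) (v 3) := T213 c (v 2) (v 0) (v 3)
    have t0 := tpath c hfree (v 1) (v 2) (v 0) (v 3) (v 4) n12 n01.symm n13 n14 n02.symm n23 n24 n03 n04 n34
    rw [p1, p2] at t0
    have hsplit : T c (v 0) (v 2) (v 3) = T c (v 0) (v 3) (v 4) ∨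
        T c (v 0) (v 2) (v 3) = T c (v 0) (v 1) (v 2) := by
      rcases t0 with h | h | h
      · exact Or.inr h.symm
      · exact absurd h h1'
      · exact Or.inl h
    rcases hsplit with hc | hc
    · exact star_aux c hfree (v 0) (v 1) (v 2) (v 3) (v 4) (v 5) (v 6)
        n01 n02 n03 n04 n05 n06 n12 n13 n14 n15 n16 n23 n24 n25 n26 n34 n35 n36 n45 n46 n56
        hc h1' h2' h3'
    · have q1 : T c (v 0) (v 3) (v 2) = T c (v 0) (v 2) (v 3) := T132 c (v 0) (v 3) (v 2)
      have q2 : T c (v 0) (v 2) (v 1) = T c (v 0) (v 1) (v 2) := T132 c (v 0) (v 2) (v 1)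
      have q3 : T c (v 0) (v 4) (v 3) = T c (v 0) (v 3) (v 4) := T132 c (v 0) (v 4) (v 3)
      exact star_aux c hfree (v 0) (v 4) (v 3) (v 2) (v 1) (v 5) (v 6)
        n04 n03 n02 n01 n05 n06 n34.symm n24.symm n14.symm n45 n46 n23.symm n13.symm n35 n36
        n12.symm n25 n26 n15 n16 n56
        (q1.trans (hc.trans q2.symm))
        (by rw [q3, q2]; exact fun h => h1' h.symm)
        (by rw [q3]; exact h3')
        (by rw [q2]; exact h2')
  · -- tight star
    rintro ⟨v, hinj, h1, h2, h3⟩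
    have h1' : T c (v 0) (v 1) (v 2) ≠ T c (v 0) (v 1) (v 3) := h1
    have h2' : T c (v 0) (v 1) (v 2) ≠ T c (v 0) (v 1) (v 4) := h2
    have h3' : T c (v 0) (v 1) (v 3) ≠ T c (v 0) (v 1) (v 4) := h3
    have n01 : v 0 ≠ v 1 := hinj.ne (by decide)
    have n02 : v 0 ≠ v 2 := hinj.ne (by decide)
    have n03 : v 0 ≠ v 3 := hinj.ne (by decide)
    have n04 : v 0 ≠ v 4 := hinj.ne (by decide)
    have n12 : v 1 ≠ v 2 := hinj.ne (by decide)
    have n13 : v 1 ≠ v 3 := hinj.ne (by decide)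
    have n14 : v 1 ≠ v 4 := hinj.ne (by decide)
    have n23 : v 2 ≠ v 3 := hinj.ne (by decide)
    have n24 : v 2 ≠ v 4 := hinj.ne (by decide)
    have n34 : v 3 ≠ v 4 := hinj.ne (by decide)
    rcases NS c hfree (v 0) (v 1) (v 2) (v 3) (v 4) n01 n02 n03 n04 n12 n13 n14 n23 n24 n34
      with h | h | h
    exacts [h1' h, h2' h, h3' h]
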